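/- Let (X,d) be a compact metric space and f_{0,∞} = {f_n}_{n=0}^∞ a sequence of continuous self-maps of X. Then (X, f_{0,∞}) is cofinitely sensitive if and only if the induced system (𝓜(X), f̂_{0,∞}) is cofinitely sensitive. -/

import Mathlib

open MeasureTheory Filter

/-- `nacomp f n = f_{n-1} ∘ ⋯ ∘ f_0` (with `nacomp f 0 = id`): the time-`n` map of the
non-autonomous system `(X, f_{0,∞})`. -/
def nacomp {Y : Type*} (f : ℕ → Y → Y) : ℕ → Y → Y
  | 0 => id
  | n + 1 => f n ∘ nacomp f n

/-- The induced pushforward map `f̂` on the space `𝓜(X)` of Borel probability measures,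
equipped with the Lévy–Prokhorov metric. -/
noncomputable def inducedMap {X : Type*} [MetricSpace X] [MeasurableSpace X] [BorelSpace X]
    (f : X → X) (hf : Continuous f) :
    LevyProkhorov (ProbabilityMeasure X) → LevyProkhorov (ProbabilityMeasure X) :=
  fun μ => (LevyProkhorov.toMeasureEquiv (α := ProbabilityMeasure X)).symm
    (((LevyProkhorov.toMeasureEquiv (α := ProbabilityMeasure X)) μ).map hf.measurable.aemeasurable)

/-- The set `N(x, ε, δ)` of times `n ≥ 1` at which some point `ε`-close to `x` separates from
`x` by more than `δ` under the non-autonomous dynamics. -/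
def NASensSet {Y : Type*} [PseudoMetricSpace Y] (f : ℕ → Y → Y) (x : Y) (ε δ : ℝ) : Set ℕ :=
  {n : ℕ | 1 ≤ n ∧ ∃ y : Y, dist x y < ε ∧ δ < dist (nacomp f n x) (nacomp f n y)}

/-- Cofinite sensitivity: some `δ > 0` works for every point and every `ε > 0`, with
`N(x, ε, δ)` cofinite in the positive integers. -/
def NACofinitelySensitive {Y : Type*} [PseudoMetricSpace Y] (f : ℕ → Y → Y) : Prop :=
  ∃ δ : ℝ, 0 < δ ∧ ∀ x : Y, ∀ ε : ℝ, 0 < ε →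
    {n : ℕ | 1 ≤ n ∧ n ∉ NASensSet f x ε δ}.Finite

/-!
For the converse direction, test sensitivity of the induced system at a Dirac mass `δₓ`: a measure
`ν` close to `δₓ` whose image under `Fₙ = f_{n-1} ∘ ⋯ ∘ f₀` is `δ`-far from `δ_{Fₙ x}` must charge
both a small ball around `x` and the set of points whose image is far from `Fₙ x`, so these meet.

For the direct direction, fix a `δ/4`-net of size `m` and, given `μ` and `ε`, a measurable
map `π` with finite range moving points by less than `ε/4`. For all but finitely many `n`, every
`p` in the range of `π` has a partner `q` with `d(p, q) < ε/4` and `d(Fₙ p, Fₙ q) > δ`. By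
pigeonhole there is a ball `A` of radius in `[δ/4, δ/2)` with `Fₙμ(A) ≥ 1/m` whose surrounding
annulus of width `δ/(8m)` has `Fₙμ`-mass at most `1/(2m)`. Moving every point that `Fₙ` sends
into `A` to `π x` or its partner, whichever has image `δ/2` away from the centre of `A`, gives a
measure `ν` with `d(μ, ν) ≤ ε/2` whose image charges the `δ/(8m)`-neighbourhood of `A` only
through the annulus; so `d(Fₙμ, Fₙν) ≥ min(δ/(8m), 1/(4m))`, independently of `μ`, `ε`, `n`.
-/

open Metric Set Function
open scoped Finset

section LevyProkhorovBounds

variable {X : Type*} [PseudoMetricSpace X] [MeasurableSpace X]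

theorem le_levyProkhorovDist_of_measureReal_lt {μ ν : Measure X} [IsFiniteMeasure μ]
    [IsFiniteMeasure ν] {c : ℝ} (hc : 0 ≤ c) {B : Set X} (hB : MeasurableSet B)
    (h : ν.real (thickening c B) + c < μ.real B) :
    c ≤ levyProkhorovDist μ ν := by
  by_contra! hlt
  have hE : levyProkhorovEDist μ ν < ENNReal.ofReal c :=
    (ENNReal.lt_ofReal_iff_toReal_lt (levyProkhorovEDist_ne_top μ ν)).2 hlt
  have hle := left_measure_le_of_levyProkhorovEDist_lt hE hB
  rw [ENNReal.toReal_ofReal hc] at hle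
  have := ENNReal.toReal_mono (by finiteness) hle
  rw [ENNReal.toReal_add (measure_ne_top _ _) ENNReal.ofReal_ne_top,
    ENNReal.toReal_ofReal hc] at this
  exact h.not_ge this

theorem levyProkhorovDist_map_le [OpensMeasurableSpace X] (μ : Measure X)
    [IsProbabilityMeasure μ] {T : X → X} (hT : Measurable T) {ε : ℝ} (hε : 0 ≤ ε)
    (hTε : ∀ x, dist (T x) x ≤ ε) :
    levyProkhorovDist (μ.map T) μ ≤ ε := by
  have := Measure.isProbabilityMeasure_map (μ := μ) hT.aemeasurable
  refine levyProkhorovDist_le_of_forall_le _ _ hε fun ε' B hε' hB => ?_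
  rw [Measure.map_apply hT hB]
  refine le_add_right (measure_mono fun x hx => mem_thickening_iff.2 ⟨T x, hx, ?_⟩)
  rw [dist_comm]
  exact (hTε x).trans_lt hε'

theorem one_le_measure_ball_add_of_levyProkhorovDist_dirac_lt [MeasurableSingletonClass X]
    {ν : Measure X} [IsProbabilityMeasure ν] {x : X} {ε : ℝ}
    (h : levyProkhorovDist (Measure.dirac x) ν < ε) :
    1 ≤ ν (ball x ε) + ENNReal.ofReal ε := by
  have hε : 0 ≤ ε := ENNReal.toReal_nonneg.trans h.le
  have hE : levyProkhorovEDist (Measure.dirac x) ν < ENNReal.ofReal ε :=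
    (ENNReal.lt_ofReal_iff_toReal_lt (levyProkhorovEDist_ne_top _ _)).2 h
  simpa [ENNReal.toReal_ofReal hε, thickening_singleton] using
    left_measure_le_of_levyProkhorovEDist_lt hE (measurableSet_singleton x)

theorem ofReal_lt_measure_compl_ball_of_lt_levyProkhorovDist_dirac [OpensMeasurableSpace X]
    {ν : Measure X} [IsProbabilityMeasure ν] {z : X} {δ : ℝ} (hδ : 0 ≤ δ)
    (h : δ < levyProkhorovDist (Measure.dirac z) ν) :
    ENNReal.ofReal δ < ν (ball z δ)ᶜ := by
  contrapose! h
  rw [levyProkhorovDist_comm]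
  refine levyProkhorovDist_le_of_forall_le _ _ hδ fun ε B hε hB => ?_
  by_cases hz : z ∈ thickening ε B
  · rw [Measure.dirac_apply_of_mem hz]
    exact prob_le_one.trans le_self_add
  · have hBc : B ⊆ (ball z δ)ᶜ := fun y hy hyz =>
      hz (mem_thickening_iff.2 ⟨y, hy, (mem_ball'.1 hyz).trans hε⟩)
    calc ν B ≤ ENNReal.ofReal ε := (measure_mono hBc).trans (h.trans (by gcongr))
      _ ≤ _ := le_add_self

end LevyProkhorovBounds

section Pigeonhole

variable {α ι : Type*} [MeasurableSpace α] {μ : Measure α} [IsFiniteMeasure μ]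

theorem exists_measureReal_univ_div_card_le {s : Finset ι} (hs : s.Nonempty) {U : ι → Set α}
    (hU : univ ⊆ ⋃ i ∈ s, U i) : ∃ i ∈ s, μ.real univ / #s ≤ μ.real (U i) := by
  refine Finset.exists_le_of_sum_le hs ?_
  rw [Finset.sum_const, nsmul_eq_mul, mul_div_cancel₀ _ (by simp [hs.ne_empty])]
  exact (measureReal_mono hU (measure_ne_top _ _)).trans (measureReal_biUnion_finset_le s U)

theorem exists_measureReal_diff_le_univ_div {U : ℕ → Set α} (hU : Monotone U)
    (hUm : ∀ j, MeasurableSet (U j)) {k : ℕ} (hk : k ≠ 0) :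
    ∃ j < k, μ.real (U (j + 1) \ U j) ≤ μ.real univ / k := by
  have hdisj : Pairwise (Disjoint on fun j => U (j + 1) \ U j) :=
    (pairwise_disjoint_on _).2 fun i j hij =>
      disjoint_left.2 fun x hi hj => hj.2 (hU (Nat.succ_le_of_lt hij) hi.1)
  obtain ⟨j, hj, hle⟩ := Finset.exists_le_of_sum_le (Finset.nonempty_range_iff.2 hk)
    (f := fun j => μ.real (U (j + 1) \ U j)) (g := fun _ => μ.real univ / k) <| by
      rw [Finset.sum_const, Finset.card_range, nsmul_eq_mul, mul_div_cancel₀ _ (by simpa),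
        ← measureReal_biUnion_finset (hdisj.set_pairwise _)
          fun j _ => (hUm (j + 1)).diff (hUm j)]
      exact measureReal_mono (subset_univ _)
  exact ⟨j, Finset.mem_range.1 hj, hle⟩

end Pigeonhole

theorem exists_simpleFunc_dist_lt {X : Type*} [PseudoMetricSpace X] [CompactSpace X] [Nonempty X]
    [MeasurableSpace X] [OpensMeasurableSpace X] {ρ : ℝ} (hρ : 0 < ρ) :
    ∃ π : SimpleFunc X X, ∀ x, dist (π x) x < ρ := by
  set e := TopologicalSpace.denseSeq X
  obtain ⟨t, ht⟩ := isCompact_univ.elim_finite_subcover (fun k => ball (e k) ρ)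
    (fun _ => isOpen_ball) fun x _ =>
      mem_iUnion.2 ((TopologicalSpace.denseRange_denseSeq X).exists_dist_lt x hρ)
  refine ⟨SimpleFunc.nearestPt e (t.sup id), fun x => ?_⟩
  obtain ⟨k, hk, hxk⟩ := mem_iUnion₂.1 (ht (mem_univ x))
  have := SimpleFunc.edist_nearestPt_le e x (Finset.le_sup (f := id) hk)
  rw [edist_dist, edist_dist, ENNReal.ofReal_le_ofReal_iff dist_nonneg] at this
  exact this.trans_lt (mem_ball'.1 hxk)

theorem continuous_nacomp {Y : Type*} [TopologicalSpace Y] {f : ℕ → Y → Y}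
    (hf : ∀ n, Continuous (f n)) : ∀ n, Continuous (nacomp f n)
  | 0 => continuous_id
  | n + 1 => (hf n).comp (continuous_nacomp hf n)

section Induced

variable {X : Type*} [MetricSpace X] [MeasurableSpace X] [BorelSpace X]

theorem inducedMap_toMeasure {g : X → X} (hg : Continuous g)
    (μ : LevyProkhorov (ProbabilityMeasure X)) :
    ((inducedMap g hg μ).toMeasure : Measure X) = (μ.toMeasure : Measure X).map g :=
  ProbabilityMeasure.toMeasure_map _ hg.measurable.aemeasurable

theorem nacomp_inducedMap_toMeasure {f : ℕ → X → X} (hf : ∀ n, Continuous (f n)) (n : ℕ)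
    (μ : LevyProkhorov (ProbabilityMeasure X)) :
    ((nacomp (fun k => inducedMap (f k) (hf k)) n μ).toMeasure : Measure X)
      = (μ.toMeasure : Measure X).map (nacomp f n) := by
  induction n with
  | zero => exact Measure.map_id.symm
  | succ n ih =>
    rw [nacomp, Function.comp_apply, inducedMap_toMeasure, ih,
      Measure.map_map (hf n).measurable (continuous_nacomp hf n).measurable]
    rfl

theorem dist_nacomp_inducedMap {f : ℕ → X → X} (hf : ∀ n, Continuous (f n)) (n : ℕ)
    (μ ν : LevyProkhorov (ProbabilityMeasure X)) :
    dist (nacomp (fun k => inducedMap (f k) (hf k)) n μ)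
        (nacomp (fun k => inducedMap (f k) (hf k)) n ν)
      = levyProkhorovDist ((μ.toMeasure : Measure X).map (nacomp f n))
          ((ν.toMeasure : Measure X).map (nacomp f n)) := by
  rw [LevyProkhorov.dist_probabilityMeasure_def, nacomp_inducedMap_toMeasure,
    nacomp_inducedMap_toMeasure]

end Induced

section Backward

variable {X : Type*} [MetricSpace X] [MeasurableSpace X] [BorelSpace X]

theorem NACofinitelySensitive.of_inducedMap {f : ℕ → X → X} {hf : ∀ n, Continuous (f n)}
    (h : NACofinitelySensitive fun n => inducedMap (f n) (hf n)) :
    NACofinitelySensitive f := by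
  obtain ⟨δ, hδ, H⟩ := h
  refine ⟨δ / 2, half_pos hδ, fun x ε hε => ?_⟩
  obtain ⟨ε₀, hε₀, hε₀ε, hε₀δ⟩ : ∃ ε₀, 0 < ε₀ ∧ ε₀ < ε ∧ ε₀ ≤ δ :=
    ⟨min ε δ / 2, by positivity, by linarith [min_le_left ε δ], by linarith [min_le_right ε δ]⟩
  refine (H (.ofMeasure (diracProba x)) ε₀ hε₀).subset fun n ⟨hn1, hn⟩ => ⟨hn1, fun hsens => hn ?_⟩
  obtain ⟨-, ν, hclose, hfar⟩ := hsens
  set F := nacomp f n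
  have hF : Measurable F := (continuous_nacomp hf n).measurable
  rw [dist_nacomp_inducedMap] at hfar
  rw [LevyProkhorov.dist_probabilityMeasure_def] at hclose
  change levyProkhorovDist (Measure.dirac x) _ < ε₀ at hclose
  change δ < levyProkhorovDist ((Measure.dirac x).map F) _ at hfar
  rw [Measure.map_dirac' hF] at hfar
  have := Measure.isProbabilityMeasure_map (μ := (ν.toMeasure : Measure X)) hF.aemeasurable
  have hnear := one_le_measure_ball_add_of_levyProkhorovDist_dirac_lt hclose
  have hmoved := ofReal_lt_measure_compl_ball_of_lt_levyProkhorovDist_dirac hδ.le hfar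
  rw [Measure.map_apply hF measurableSet_ball.compl] at hmoved
  obtain ⟨y, hyx, hyF⟩ := nonempty_inter_of_measure_lt_add (ν.toMeasure : Measure X)
    (s := ball x ε₀) (hF measurableSet_ball.compl) (subset_univ _) (subset_univ _) <| by
      rw [measure_univ]
      refine hnear.trans_lt (ENNReal.add_lt_add_left (measure_ne_top _ _) ?_)
      exact (ENNReal.ofReal_le_ofReal hε₀δ).trans_lt hmoved
  refine ⟨hn1, y, (mem_ball'.1 hyx).trans hε₀ε, ?_⟩
  have : δ ≤ dist (F x) (F y) := by simpa [mem_ball, dist_comm] using hyF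
  linarith

end Backward

section Perturbation

variable {X : Type*} [PseudoMetricSpace X] [MeasurableSpace X]

theorem exists_ball_measureReal_annulus_le [OpensMeasurableSpace X] (μ : Measure X)
    [IsProbabilityMeasure μ] {s : Finset X} (hs : s.Nonempty) {ρ r : ℝ} (hr : 0 ≤ r)
    (hcover : univ ⊆ ⋃ c ∈ s, ball c ρ) {k : ℕ} (hk : k ≠ 0) :
    ∃ c R, R + r ≤ ρ + k * r ∧ 1 / #s ≤ μ.real (ball c R) ∧
      μ.real (ball c (R + r) \ ball c R) ≤ 1 / k := by
  obtain ⟨c, -, hc⟩ := exists_measureReal_univ_div_card_le (μ := μ) hs hcover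
  obtain ⟨j, hj, hann⟩ := exists_measureReal_diff_le_univ_div (μ := μ)
    (U := fun j : ℕ => ball c (ρ + j * r)) (fun i j hij => ball_subset_ball (by gcongr))
    (fun _ => measurableSet_ball) hk
  have hjk : (j : ℝ) + 1 ≤ k := by exact_mod_cast hj
  rw [probReal_univ] at hc hann
  refine ⟨c, ρ + j * r, by nlinarith, hc.trans (measureReal_mono (ball_subset_ball ?_)), ?_⟩
  · have : 0 ≤ (j : ℝ) * r := by positivity
    linarith
  · simpa only [Nat.cast_add, Nat.cast_one, add_mul, one_mul, add_assoc] using hann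

theorem exists_measurable_pushAway {F : X → X} (hF : Measurable F) {δ ε : ℝ}
    (π : SimpleFunc X X) (hπ : ∀ x, dist (π x) x ≤ ε)
    (hsens : ∀ p ∈ π.range, ∃ q, dist p q ≤ ε ∧ δ < dist (F p) (F q))
    (c : X) {A : Set X} (hA : MeasurableSet A) :
    ∃ T : X → X, Measurable T ∧ (∀ x, dist (T x) x ≤ 2 * ε) ∧ (∀ x, F x ∉ A → T x = x) ∧
      ∀ x, F x ∈ A → δ / 2 ≤ dist (F (T x)) c := by
  classical
  choose! q hq using hsens
  -- of two points whose images are `δ` apart, one has its image `δ / 2` away from `c`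
  set a : X → X := fun p => if δ / 2 ≤ dist (F p) c then p else q p
  have ha : ∀ p ∈ π.range, dist (a p) p ≤ ε ∧ δ / 2 ≤ dist (F (a p)) c := by
    intro p hp
    obtain ⟨hpq, hFpq⟩ := hq p hp
    by_cases hfar : δ / 2 ≤ dist (F p) c
    · simpa [a, hfar] using dist_nonneg.trans (hπ p)
    · simp only [a, hfar, if_false]
      refine ⟨by rwa [dist_comm], ?_⟩
      linarith [dist_triangle_right (F p) (F (q p)) c]
  refine ⟨(F ⁻¹' A).piecewise (π.map a) id,
    Measurable.piecewise (hF hA) (π.map a).measurable measurable_id, fun x => ?_,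
    fun x hx => piecewise_eq_of_notMem (F ⁻¹' A) _ _ hx, fun x hx => ?_⟩
  · by_cases hx : F x ∈ A
    · rw [piecewise_eq_of_mem (F ⁻¹' A) _ _ hx, SimpleFunc.map_apply]
      linarith [dist_triangle (a (π x)) (π x) x, (ha _ (π.mem_range_self x)).1, hπ x]
    · rw [piecewise_eq_of_notMem (F ⁻¹' A) _ _ hx, id, dist_self]
      linarith [dist_nonneg.trans (hπ x)]
  · rw [piecewise_eq_of_mem (F ⁻¹' A) _ _ hx, SimpleFunc.map_apply]
    exact (ha _ (π.mem_range_self x)).2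

end Perturbation

section Forward

variable {X : Type*} [MetricSpace X] [MeasurableSpace X] [BorelSpace X]

/-- The annuli have width `δ / (8 #s)`, so that `2 #s` of them fit between radii `δ / 4` and
`δ / 2`; the bound `1 / (4 #s)` leaves room between the mass `≤ 1 / (2 #s)` of the thinnest annulus
and the mass `≥ 1 / #s` of the ball inside it. -/
theorem exists_measurable_le_levyProkhorovDist_map {F : X → X} (hF : Continuous F) {δ ε : ℝ}
    (hδ : 0 < δ) {s : Finset X} (hs : s.Nonempty) (hcover : univ ⊆ ⋃ c ∈ s, ball c (δ / 4))
    (π : SimpleFunc X X) (hπ : ∀ x, dist (π x) x ≤ ε)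
    (hsens : ∀ p ∈ π.range, ∃ q, dist p q ≤ ε ∧ δ < dist (F p) (F q))
    (μ : Measure X) [IsProbabilityMeasure μ] :
    ∃ T : X → X, Measurable T ∧ (∀ x, dist (T x) x ≤ 2 * ε) ∧
      min (δ / (8 * #s)) (1 / (4 * #s)) ≤ levyProkhorovDist (μ.map F) (μ.map (F ∘ T)) := by
  have hm : (0 : ℝ) < #s := by exact_mod_cast hs.card_pos
  set r := δ / (8 * #s)
  set κ := min r (1 / (4 * #s))
  have := Measure.isProbabilityMeasure_map (μ := μ) hF.aemeasurable
  obtain ⟨c, R, hRr, hmass, hann⟩ := exists_ball_measureReal_annulus_le (μ.map F) hs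
    (r := r) (by positivity) hcover (k := 2 * #s) (by simpa using hs.card_pos.ne')
  have hRδ : R + r ≤ δ / 2 := by
    convert hRr using 1
    simp only [r]; push_cast; field_simp; ring
  obtain ⟨T, hT, hTdist, hTfix, hTfar⟩ := exists_measurable_pushAway hF.measurable π hπ hsens c
    (measurableSet_ball (x := c) (ε := R))
  refine ⟨T, hT, hTdist, le_levyProkhorovDist_of_measureReal_lt (by positivity)
    (measurableSet_ball (x := c) (ε := R)) ?_⟩
  have hpushed : F ∘ T ⁻¹' thickening κ (ball c R) ⊆ F ⁻¹' (ball c (R + r) \ ball c R) := by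
    intro x hx
    have hxr : F (T x) ∈ ball c (R + r) := by
      rw [add_comm]
      exact thickening_ball _ _ _ (thickening_mono (min_le_left _ _) _ hx)
    by_cases hxA : F x ∈ ball c R
    · exact absurd (mem_ball.1 hxr) (by linarith [hTfar x hxA])
    · rw [hTfix x hxA] at hxr
      exact ⟨hxr, hxA⟩
  calc (μ.map (F ∘ T)).real (thickening κ (ball c R)) + κ
      ≤ (μ.map F).real (ball c (R + r) \ ball c R) + 1 / (4 * #s) := by
        gcongr
        · rw [map_measureReal_apply (hF.measurable.comp hT) isOpen_thickening.measurableSet,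
            map_measureReal_apply hF.measurable (measurableSet_ball.diff measurableSet_ball)]
          exact measureReal_mono hpushed
        · exact min_le_right _ _
    _ ≤ 1 / (2 * #s) + 1 / (4 * #s) := by
        gcongr
        simpa using hann
    _ < 1 / #s := by
        field_simp
        norm_num
    _ ≤ (μ.map F).real (ball c R) := hmass

theorem NACofinitelySensitive.inducedMap [CompactSpace X] {f : ℕ → X → X}
    (hf : ∀ n, Continuous (f n)) (h : NACofinitelySensitive f) :
    NACofinitelySensitive fun n => inducedMap (f n) (hf n) := by
  rcases isEmpty_or_nonempty X with hX | hX
  · exact ⟨1, one_pos, fun μ =>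
      isEmptyElim (nonempty_of_isProbabilityMeasure (μ.toMeasure : Measure X)).some⟩
  obtain ⟨δ, hδ, H⟩ := h
  obtain ⟨σ, hσ⟩ := exists_simpleFunc_dist_lt (X := X) (by positivity : 0 < δ / 4)
  have hcover : univ ⊆ ⋃ c ∈ σ.range, ball c (δ / 4) := fun x _ =>
    mem_iUnion₂.2 ⟨σ x, σ.mem_range_self x, mem_ball'.2 (hσ x)⟩
  have hs : σ.range.Nonempty := ⟨_, σ.mem_range_self hX.some⟩
  have hm : (0 : ℝ) < #σ.range := by exact_mod_cast hs.card_pos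
  set κ := min (δ / (8 * #σ.range)) (1 / (4 * #σ.range))
  have hκ : 0 < κ := lt_min (by positivity) (by positivity)
  refine ⟨κ / 2, half_pos hκ, fun μ ε hε => ?_⟩
  obtain ⟨π, hπ⟩ := exists_simpleFunc_dist_lt (X := X) (by positivity : 0 < ε / 4)
  refine (π.range.finite_toSet.biUnion fun p _ => H p (ε / 4) (by positivity)).subset
    fun n ⟨hn1, hn⟩ => by_contra fun hbad => hn ⟨hn1, ?_⟩
  have hsens : ∀ p ∈ π.range, ∃ q, dist p q ≤ ε / 4 ∧ δ < dist (nacomp f n p) (nacomp f n q) := by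
    intro p hp
    by_contra hp'
    refine hbad (mem_biUnion hp ⟨hn1, fun ⟨_, q, hq, hq'⟩ => hp' ⟨q, hq.le, hq'⟩⟩)
  obtain ⟨T, hT, hTdist, hLP⟩ := exists_measurable_le_levyProkhorovDist_map
    (continuous_nacomp hf n) hδ hs hcover π (fun x => (hπ x).le)
    hsens (μ.toMeasure : Measure X)
  refine ⟨.ofMeasure (μ.toMeasure.map hT.aemeasurable), ?_, ?_⟩
  · rw [LevyProkhorov.dist_probabilityMeasure_def, levyProkhorovDist_comm]
    change levyProkhorovDist ((μ.toMeasure : Measure X).map T) _ < ε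
    exact (levyProkhorovDist_map_le _ hT (by positivity) hTdist).trans_lt (by linarith)
  · rw [dist_nacomp_inducedMap]
    change _ < levyProkhorovDist _ (((μ.toMeasure : Measure X).map T).map _)
    rw [Measure.map_map (continuous_nacomp hf n).measurable hT]
    linarith

end Forward

/-- `(X, f_{0,∞})` is cofinitely sensitive iff the induced system `(𝓜(X), f̂_{0,∞})` is
cofinitely sensitive. -/
theorem cofinitelySensitive_iff_induced
    {X : Type*} [MetricSpace X] [CompactSpace X] [MeasurableSpace X] [BorelSpace X]
    (f : ℕ → X → X) (hf : ∀ n, Continuous (f n)) :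
    NACofinitelySensitive f ↔ NACofinitelySensitive (fun n => inducedMap (f n) (hf n)) :=
  ⟨NACofinitelySensitive.inducedMap hf, NACofinitelySensitive.of_inducedMap⟩
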